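/- Let τ₀ : ℝ² → (0,∞) and Q₀ : ℝ² → ℂ_I be smooth. Then: (i) the map w ↦ (1/2)(1+iI)·w is an ℝ-linear bijection from W onto L; (ii) if v : ℝ² → W is smooth and satisfies the v-system ∂_z v = (∂_z(log √τ₀))·v + (i·Q₀/√τ₀)·J·v, ∂_z̄ v = (i·√τ₀/4)·J·v, then g := (1/2)(1+iI)·v : ℝ² → L satisfies the g-system ∂_z g = (∂_z(log √τ₀))·g + (Q₀/√τ₀)·J·ĝ·I, ∂_z̄ g = (√τ₀/4)·J·ĝ·I; (iii) conversely, if g : ℝ² → L is smooth and satisfies the g-system, then the unique smooth map v : ℝ² → W with g = (1/2)(1+iI)·v satisfies the v-system. (This is the algebraic correspondence between the spinor equations of H = 1/2 surfaces in ℝ^{1,2} and in ℍ²×ℝ.) -/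

import Mathlib

/-!
`ℍ^ℂ` is modelled as `Quaternion ℂ` (complex coefficients on `1, I, J, K`, central complex
unit `i = Complex.I`, `I² = J² = K² = −1`, `I*J = K = −J*I`).  Maps on `ℝ²` are taken on
`ℝ × ℝ`; smoothness and the partial derivatives `∂ₓ`, `∂_y` are meant coefficientwise, and
`qdz f = (1/2)(∂ₓ f − I·∂_y f)`, `qdzbar f = (1/2)(∂ₓ f + I·∂_y f)` (left multiplication
by the quaternion `I`).  `cI` embeds `ℂ` as `ℂ_I = ℝ·1 ⊕ ℝ·I ⊂ ℍ^ℂ`.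
-/

noncomputable section

/-- The quaternion `I`. -/
def Iq : Quaternion ℂ := ⟨0, 1, 0, 0⟩

/-- The quaternion `J`. -/
def Jq : Quaternion ℂ := ⟨0, 0, 1, 0⟩

/-- Coefficientwise complex conjugation `â` on the complex quaternions. -/
def qhat (a : Quaternion ℂ) : Quaternion ℂ :=
  ⟨starRingEnd ℂ a.re, starRingEnd ℂ a.imI, starRingEnd ℂ a.imJ, starRingEnd ℂ a.imK⟩

/-- The embedding of `ℂ` onto `ℂ_I = ℝ·1 ⊕ ℝ·I ⊂ ℍ^ℂ`, sending the complex unit to `I`. -/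
def cI (w : ℂ) : Quaternion ℂ := ⟨((w.re : ℝ) : ℂ), ((w.im : ℝ) : ℂ), 0, 0⟩

/-- The coefficientwise directional derivative of an `ℍ^ℂ`-valued map on `ℝ²`. -/
def qpd (v : ℝ × ℝ) (f : ℝ × ℝ → Quaternion ℂ) (p : ℝ × ℝ) : Quaternion ℂ :=
  ⟨fderiv ℝ (fun s => (f s).re) p v, fderiv ℝ (fun s => (f s).imI) p v,
   fderiv ℝ (fun s => (f s).imJ) p v, fderiv ℝ (fun s => (f s).imK) p v⟩

/-- `∂_z f := (1/2)(∂ₓ f − I·∂_y f)`, with `I·` the left multiplication by `I` in `ℍ^ℂ`. -/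
def qdz (f : ℝ × ℝ → Quaternion ℂ) (p : ℝ × ℝ) : Quaternion ℂ :=
  (2 : ℂ)⁻¹ • (qpd (1, 0) f p - Iq * qpd (0, 1) f p)

/-- `∂_z̄ f := (1/2)(∂ₓ f + I·∂_y f)`. -/
def qdzbar (f : ℝ × ℝ → Quaternion ℂ) (p : ℝ × ℝ) : Quaternion ℂ :=
  (2 : ℂ)⁻¹ • (qpd (1, 0) f p + Iq * qpd (0, 1) f p)

/-- Smoothness (coefficientwise) of an `ℍ^ℂ`-valued map on `ℝ²`. -/
def QSmooth (f : ℝ × ℝ → Quaternion ℂ) : Prop :=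
  ContDiff ℝ (⊤ : ℕ∞) (fun p => (f p).re) ∧ ContDiff ℝ (⊤ : ℕ∞) (fun p => (f p).imI) ∧
  ContDiff ℝ (⊤ : ℕ∞) (fun p => (f p).imJ) ∧ ContDiff ℝ (⊤ : ℕ∞) (fun p => (f p).imK)

/-- The real-valued function `r`, regarded as `ℂ_I`-valued (i.e. `ℍ^ℂ`-valued). -/
def rQ (r : ℝ) : Quaternion ℂ := ⟨((r : ℝ) : ℂ), 0, 0, 0⟩

/-- `L := {(1/2)(1+iI)(a+bJ) : a, b ∈ ℂ} ⊂ ℍ^ℂ`. -/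
def Lset : Set (Quaternion ℂ) :=
  {g | ∃ a b : ℂ, g = (2 : ℂ)⁻¹ •
    ((⟨1, Complex.I, 0, 0⟩ : Quaternion ℂ) * (⟨a, 0, b, 0⟩ : Quaternion ℂ))}

/-- For `g = (1/2)(1+iI)(a+bJ) ∈ L` (so that `a = 2·g.re`, `b = 2·g.imJ`), the squared norm
`|g|² := |a|² − |b|²`. -/
def LnormSq (g : Quaternion ℂ) : ℝ :=
  Complex.normSq (2 * g.re) - Complex.normSq (2 * g.imJ)

/-- The `g`-system: `∂_z g = (∂_z log √τ₀)·g + (Q₀/√τ₀)·J·ĝ·I` and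
`∂_z̄ g = (√τ₀/4)·J·ĝ·I`, with the `ℂ_I`-valued Weierstrass data `(Q₀, τ₀)`. -/
def GSystem (τ₀ : ℝ × ℝ → ℝ) (Q₀ : ℝ × ℝ → ℂ) (g : ℝ × ℝ → Quaternion ℂ) : Prop :=
  ∀ p : ℝ × ℝ,
    qdz g p = qdz (fun s => rQ (Real.log (Real.sqrt (τ₀ s)))) p * g p
        + (Real.sqrt (τ₀ p))⁻¹ • (cI (Q₀ p) * (Jq * qhat (g p) * Iq)) ∧
    qdzbar g p = (Real.sqrt (τ₀ p) / 4) • (Jq * qhat (g p) * Iq)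

/-- `W := {α₀·1 + α₁I + iα₂J + iα₃K : α₀,…,α₃ ∈ ℝ} ⊂ ℍ^ℂ`. -/
def Wset : Set (Quaternion ℂ) :=
  {v | ∃ α₀ α₁ α₂ α₃ : ℝ,
    v = ⟨((α₀ : ℝ) : ℂ), ((α₁ : ℝ) : ℂ), Complex.I * (α₂ : ℂ), Complex.I * (α₃ : ℂ)⟩}

/-- The complex quaternion `1 + iI`. -/
def onePiI : Quaternion ℂ := ⟨1, Complex.I, 0, 0⟩

/-- The map `w ↦ (1/2)(1+iI)·w`. -/
def ψL (w : Quaternion ℂ) : Quaternion ℂ :=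
  (2 : ℂ)⁻¹ • (onePiI * w)

/-- The `v`-system: `∂_z v = (∂_z log √τ₀)·v + (i·Q₀/√τ₀)·J·v` and
`∂_z̄ v = (i·√τ₀/4)·J·v` (the spinor equation of `H = 1/2` surfaces in `ℝ^{1,2}`). -/
def VSystem (τ₀ : ℝ × ℝ → ℝ) (Q₀ : ℝ × ℝ → ℂ) (v : ℝ × ℝ → Quaternion ℂ) : Prop :=
  ∀ p : ℝ × ℝ,
    qdz v p = qdz (fun s => rQ (Real.log (Real.sqrt (τ₀ s)))) p * v p
        + (Real.sqrt (τ₀ p))⁻¹ • (Complex.I • (cI (Q₀ p) * (Jq * v p))) ∧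
    qdzbar v p = (Real.sqrt (τ₀ p) / 4) • (Complex.I • (Jq * v p))


/-!
`ψL` is left multiplication by the constant `½(1+iI)`, which commutes with complex scalars, with
`∂ₓ, ∂_y` and with left multiplication by `ℂ_I` (in particular by `I`). Hence it carries `∂_z v`,
`∂_z̄ v` and the `ℂ_I`-valued coefficient terms of the `v`-system to the corresponding terms of
the `g`-system; the one new identity is `J·ĝ·I = ½(1+iI)·(i·J·v)` for `v ∈ W`. On `W` the map is
inverted by twice the coordinate projection onto `W` along `i·W`; this projection commutes with
`∂ₓ, ∂_y` and with `I·`, so `W` is stable under `∂_z, ∂_z̄`, and both systems are equivalent for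
`W`-valued `v`.
-/

/-- `Quaternion` is not reducible to `QuaternionAlgebra`, so the `simp` lemmas about products in
`ℍ[R]` do not fire on anonymous constructors; `qmk` is a constructor typed as `Quaternion ℂ`. -/
def qmk (a b c d : ℂ) : Quaternion ℂ := ⟨a, b, c, d⟩

@[simp] lemma qmk_re (a b c d : ℂ) : (qmk a b c d).re = a := rfl
@[simp] lemma qmk_imI (a b c d : ℂ) : (qmk a b c d).imI = b := rfl
@[simp] lemma qmk_imJ (a b c d : ℂ) : (qmk a b c d).imJ = c := rfl
@[simp] lemma qmk_imK (a b c d : ℂ) : (qmk a b c d).imK = d := rfl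

@[simp] lemma Iq_eq : Iq = qmk 0 1 0 0 := rfl
@[simp] lemma Jq_eq : Jq = qmk 0 0 1 0 := rfl
@[simp] lemma onePiI_eq : onePiI = qmk 1 Complex.I 0 0 := rfl
@[simp] lemma cI_eq (z : ℂ) : cI z = qmk z.re z.im 0 0 := rfl
@[simp] lemma rQ_eq (r : ℝ) : rQ r = qmk r 0 0 0 := rfl
@[simp] lemma qhat_eq (a : Quaternion ℂ) :
    qhat a = qmk (starRingEnd ℂ a.re) (starRingEnd ℂ a.imI) (starRingEnd ℂ a.imJ)
      (starRingEnd ℂ a.imK) := rfl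

def Wmk (a b c d : ℝ) : Quaternion ℂ := qmk a b (Complex.I * c) (Complex.I * d)

lemma mem_Wset_iff {w : Quaternion ℂ} : w ∈ Wset ↔ ∃ a b c d : ℝ, w = Wmk a b c d := Iff.rfl

lemma mem_Lset_iff {g : Quaternion ℂ} :
    g ∈ Lset ↔ ∃ a b : ℂ, g = (2 : ℂ)⁻¹ • (onePiI * qmk a 0 b 0) := Iff.rfl

lemma cI_I : cI Complex.I = Iq := by ext <;> simp

def ψLₗ : Quaternion ℂ →ₗ[ℝ] Quaternion ℂ where
  toFun := ψL
  map_add' w w' := by simp only [ψL, mul_add, smul_add]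
  map_smul' c w := by ext <;> simp [ψL] <;> ring

lemma ψLₗ_apply (w : Quaternion ℂ) : ψLₗ w = ψL w := rfl

lemma cI_mul_ψL (z : ℂ) (w : Quaternion ℂ) : cI z * ψL w = ψL (cI z * w) := by
  ext <;> simp [ψL, Complex.ext_iff] <;> constructor <;> ring

lemma ψL_Iq_mul (x : Quaternion ℂ) : ψL (Iq * x) = Iq * ψL x := by
  simpa only [cI_I] using (cI_mul_ψL Complex.I x).symm

lemma ψL_mem_Lset {w : Quaternion ℂ} (hw : w ∈ Wset) : ψL w ∈ Lset := by
  obtain ⟨a, b, c, d, rfl⟩ := mem_Wset_iff.1 hw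
  refine ⟨a - Complex.I * b, d + Complex.I * c, ?_⟩
  ext <;> simp [ψL, Wmk, Complex.ext_iff]

lemma Jq_mul_qhat_ψL_mul_Iq {w : Quaternion ℂ} (hw : w ∈ Wset) :
    Jq * qhat (ψL w) * Iq = ψL (Complex.I • (Jq * w)) := by
  obtain ⟨a, b, c, d, rfl⟩ := mem_Wset_iff.1 hw
  ext <;> simp [ψL, Wmk, Complex.ext_iff]

def projW : Quaternion ℂ →ₗ[ℝ] Quaternion ℂ where
  toFun x := Wmk x.re.re x.imI.re x.imJ.im x.imK.im
  map_add' x y := by ext <;> simp [Wmk, Complex.ext_iff]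
  map_smul' c x := by ext <;> simp [Wmk, Complex.ext_iff]

lemma projW_mem_Wset (x : Quaternion ℂ) : projW x ∈ Wset := ⟨_, _, _, _, rfl⟩

lemma projW_of_mem_Wset {w : Quaternion ℂ} (hw : w ∈ Wset) : projW w = w := by
  obtain ⟨a, b, c, d, rfl⟩ := mem_Wset_iff.1 hw
  ext <;> simp [projW, Wmk]

lemma mem_Wset_iff_projW_eq {w : Quaternion ℂ} : w ∈ Wset ↔ projW w = w :=
  ⟨projW_of_mem_Wset, fun h => h ▸ projW_mem_Wset w⟩

lemma projW_cI_mul (z : ℂ) (x : Quaternion ℂ) : projW (cI z * x) = cI z * projW x := by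
  ext <;> simp [projW, Wmk, Complex.ext_iff]

lemma projW_Iq_mul (x : Quaternion ℂ) : projW (Iq * x) = Iq * projW x := by
  simpa only [cI_I] using projW_cI_mul Complex.I x

lemma add_mem_Wset {w w' : Quaternion ℂ} (hw : w ∈ Wset) (hw' : w' ∈ Wset) : w + w' ∈ Wset := by
  rw [mem_Wset_iff_projW_eq] at *
  rw [map_add, hw, hw']

lemma smul_mem_Wset (t : ℝ) {w : Quaternion ℂ} (hw : w ∈ Wset) : t • w ∈ Wset := by
  rw [mem_Wset_iff_projW_eq] at *
  rw [map_smul, hw]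

lemma cI_mul_mem_Wset (z : ℂ) {w : Quaternion ℂ} (hw : w ∈ Wset) : cI z * w ∈ Wset := by
  rw [mem_Wset_iff_projW_eq] at *
  rw [projW_cI_mul, hw]

lemma I_smul_Jq_mul_mem_Wset {w : Quaternion ℂ} (hw : w ∈ Wset) :
    Complex.I • (Jq * w) ∈ Wset := by
  obtain ⟨a, b, c, d, rfl⟩ := mem_Wset_iff.1 hw
  exact ⟨c, -d, a, -b, by ext <;> simp [Wmk, Complex.ext_iff]⟩

lemma mul_complex_smul (x y : Quaternion ℂ) (c : ℂ) : x * (c • y) = c • (x * y) :=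
  Algebra.mul_smul_comm c x y

lemma I_smul_cI_mul_Jq_mul_mem_Wset (z : ℂ) {w : Quaternion ℂ} (hw : w ∈ Wset) :
    Complex.I • (cI z * (Jq * w)) ∈ Wset := by
  rw [← mul_complex_smul]
  exact cI_mul_mem_Wset z (I_smul_Jq_mul_mem_Wset hw)

def ψLInv : Quaternion ℂ →ₗ[ℝ] Quaternion ℂ := (2 : ℝ) • projW

lemma ψLInv_mem_Wset (g : Quaternion ℂ) : ψLInv g ∈ Wset :=
  smul_mem_Wset 2 (projW_mem_Wset g)

lemma ψLInv_ψL {w : Quaternion ℂ} (hw : w ∈ Wset) : ψLInv (ψL w) = w := by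
  obtain ⟨a, b, c, d, rfl⟩ := mem_Wset_iff.1 hw
  ext <;> simp [ψLInv, projW, ψL, Wmk, Complex.ext_iff]

lemma ψL_ψLInv {g : Quaternion ℂ} (hg : g ∈ Lset) : ψL (ψLInv g) = g := by
  obtain ⟨a, b, rfl⟩ := mem_Lset_iff.1 hg
  ext <;> simp [ψLInv, projW, ψL, Wmk, Complex.ext_iff]

lemma ψL_injOn_Wset : Set.InjOn ψL Wset := fun w hw w' hw' h => by
  rw [← ψLInv_ψL hw, h, ψLInv_ψL hw']

lemma ψL_bijOn : Set.BijOn ψL Wset Lset :=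
  ⟨fun _ => ψL_mem_Lset, ψL_injOn_Wset, fun g hg => ⟨ψLInv g, ψLInv_mem_Wset g, ψL_ψLInv hg⟩⟩

lemma ψL_cI_mul_add_smul {w : Quaternion ℂ} (hw : w ∈ Wset) (D Q : ℂ) (t : ℝ) :
    ψL (cI D * w + t • (Complex.I • (cI Q * (Jq * w))))
      = cI D * ψL w + t • (cI Q * (Jq * qhat (ψL w) * Iq)) := by
  rw [Jq_mul_qhat_ψL_mul_Iq hw, cI_mul_ψL, cI_mul_ψL, mul_complex_smul, ← ψLₗ_apply,
    map_add, map_smul]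
  rfl

lemma ψL_smul_I_smul_Jq_mul {w : Quaternion ℂ} (hw : w ∈ Wset) (t : ℝ) :
    ψL (t • (Complex.I • (Jq * w))) = t • (Jq * qhat (ψL w) * Iq) := by
  rw [Jq_mul_qhat_ψL_mul_Iq hw, ← ψLₗ_apply, map_smul]
  rfl

def qcoords : Quaternion ℂ ≃ₗ[ℝ] (Fin 4 → ℂ) :=
  (QuaternionAlgebra.linearEquivTuple (-1 : ℂ) 0 (-1)).restrictScalars ℝ

lemma qcoords_apply (x : Quaternion ℂ) : qcoords x = ![x.re, x.imI, x.imJ, x.imK] := rfl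

lemma qSmooth_iff_contDiff_qcoords {f : ℝ × ℝ → Quaternion ℂ} :
    QSmooth f ↔ ContDiff ℝ (⊤ : ℕ∞) (fun s => qcoords (f s)) := by
  simp [contDiff_pi, Fin.forall_fin_succ, QSmooth, qcoords_apply]

lemma QSmooth.differentiableAt {f : ℝ × ℝ → Quaternion ℂ} (hf : QSmooth f) (p : ℝ × ℝ) :
    DifferentiableAt ℝ (fun s => qcoords (f s)) p :=
  (qSmooth_iff_contDiff_qcoords.1 hf).differentiable (by simp) p

lemma qpd_eq_fderiv_qcoords {f : ℝ × ℝ → Quaternion ℂ} {p : ℝ × ℝ}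
    (hf : DifferentiableAt ℝ (fun s => qcoords (f s)) p) (d : ℝ × ℝ) :
    qpd d f p = qcoords.symm (fderiv ℝ (fun s => qcoords (f s)) p d) := by
  rw [fderiv_pi (differentiableAt_pi.1 hf)]
  rfl

lemma complex_two_inv_smul (x : Quaternion ℂ) : (2 : ℂ)⁻¹ • x = (2 : ℝ)⁻¹ • x := by
  ext <;> simp

section LinearMapComp

variable (T : Quaternion ℂ →ₗ[ℝ] Quaternion ℂ)

def LinearMap.inQcoords : (Fin 4 → ℂ) →L[ℝ] (Fin 4 → ℂ) :=
  LinearMap.toContinuousLinearMap (qcoords.toLinearMap ∘ₗ T ∘ₗ qcoords.symm.toLinearMap)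

lemma qcoords_linearMap_comp (f : ℝ × ℝ → Quaternion ℂ) :
    (fun s => qcoords (T (f s))) = fun s => T.inQcoords (qcoords (f s)) := by
  funext s
  simp [LinearMap.inQcoords]

lemma QSmooth.linearMap_comp {f : ℝ × ℝ → Quaternion ℂ} (hf : QSmooth f) :
    QSmooth (fun s => T (f s)) := by
  rw [qSmooth_iff_contDiff_qcoords] at *
  rw [qcoords_linearMap_comp]
  exact T.inQcoords.contDiff.comp hf

lemma qpd_linearMap_comp {f : ℝ × ℝ → Quaternion ℂ} {p : ℝ × ℝ}
    (hf : DifferentiableAt ℝ (fun s => qcoords (f s)) p) (d : ℝ × ℝ) :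
    qpd d (fun s => T (f s)) p = T (qpd d f p) := by
  have hT : HasFDerivAt (fun s => qcoords (T (f s)))
      (T.inQcoords.comp (fderiv ℝ (fun s => qcoords (f s)) p)) p := by
    rw [qcoords_linearMap_comp]
    exact T.inQcoords.hasFDerivAt.comp p hf.hasFDerivAt
  rw [qpd_eq_fderiv_qcoords hT.differentiableAt, qpd_eq_fderiv_qcoords hf, hT.fderiv]
  simp [LinearMap.inQcoords]

variable {T}

lemma qdz_linearMap_comp (hT : ∀ x, T (Iq * x) = Iq * T x) {f : ℝ × ℝ → Quaternion ℂ}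
    {p : ℝ × ℝ} (hf : DifferentiableAt ℝ (fun s => qcoords (f s)) p) :
    qdz (fun s => T (f s)) p = T (qdz f p) := by
  simp only [qdz, qpd_linearMap_comp T hf, ← hT, complex_two_inv_smul, map_sub, map_smul]

lemma qdzbar_linearMap_comp (hT : ∀ x, T (Iq * x) = Iq * T x) {f : ℝ × ℝ → Quaternion ℂ}
    {p : ℝ × ℝ} (hf : DifferentiableAt ℝ (fun s => qcoords (f s)) p) :
    qdzbar (fun s => T (f s)) p = T (qdzbar f p) := by
  simp only [qdzbar, qpd_linearMap_comp T hf, ← hT, complex_two_inv_smul, map_add, map_smul]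

end LinearMapComp

lemma fderiv_ofReal_comp {E : Type*} [NormedAddCommGroup E] [NormedSpace ℝ E] (h : E → ℝ)
    (x : E) : fderiv ℝ (fun s => (h s : ℂ)) x = Complex.ofRealCLM.comp (fderiv ℝ h x) := by
  by_cases hd : DifferentiableAt ℝ h x
  · exact (Complex.ofRealCLM.hasFDerivAt.comp x hd.hasFDerivAt).fderiv
  · have hd' : ¬ DifferentiableAt ℝ (fun s => (h s : ℂ)) x := fun h' => by
      have : h = fun s => Complex.reCLM (h s : ℂ) := by funext s; simp
      exact hd (this ▸ Complex.reCLM.differentiableAt.comp x h')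
    rw [fderiv_zero_of_not_differentiableAt hd, fderiv_zero_of_not_differentiableAt hd',
      ContinuousLinearMap.comp_zero]

lemma qpd_rQ_comp (h : ℝ × ℝ → ℝ) (d p : ℝ × ℝ) :
    qpd d (fun s => rQ (h s)) p = rQ (fderiv ℝ h p d) := by
  ext <;> simp [qpd, fderiv_ofReal_comp]

lemma qdz_rQ_comp (h : ℝ × ℝ → ℝ) (p : ℝ × ℝ) :
    qdz (fun s => rQ (h s)) p = cI ⟨fderiv ℝ h p (1, 0) / 2, -fderiv ℝ h p (0, 1) / 2⟩ := by
  rw [qdz, qpd_rQ_comp, qpd_rQ_comp]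
  ext <;> simp [Complex.ext_iff] <;> ring

lemma qdz_ψL {f : ℝ × ℝ → Quaternion ℂ} {p : ℝ × ℝ}
    (hf : DifferentiableAt ℝ (fun s => qcoords (f s)) p) :
    qdz (fun s => ψL (f s)) p = ψL (qdz f p) :=
  qdz_linearMap_comp (T := ψLₗ) ψL_Iq_mul hf

lemma qdzbar_ψL {f : ℝ × ℝ → Quaternion ℂ} {p : ℝ × ℝ}
    (hf : DifferentiableAt ℝ (fun s => qcoords (f s)) p) :
    qdzbar (fun s => ψL (f s)) p = ψL (qdzbar f p) :=
  qdzbar_linearMap_comp (T := ψLₗ) ψL_Iq_mul hf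

lemma qdz_mem_Wset {v : ℝ × ℝ → Quaternion ℂ} {p : ℝ × ℝ}
    (hv : DifferentiableAt ℝ (fun s => qcoords (v s)) p) (hW : ∀ s, v s ∈ Wset) :
    qdz v p ∈ Wset := by
  have h := qdz_linearMap_comp projW_Iq_mul hv
  rwa [show (fun s => projW (v s)) = v from funext fun s => projW_of_mem_Wset (hW s), eq_comm,
    ← mem_Wset_iff_projW_eq] at h

lemma qdzbar_mem_Wset {v : ℝ × ℝ → Quaternion ℂ} {p : ℝ × ℝ}
    (hv : DifferentiableAt ℝ (fun s => qcoords (v s)) p) (hW : ∀ s, v s ∈ Wset) :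
    qdzbar v p ∈ Wset := by
  have h := qdzbar_linearMap_comp projW_Iq_mul hv
  rwa [show (fun s => projW (v s)) = v from funext fun s => projW_of_mem_Wset (hW s), eq_comm,
    ← mem_Wset_iff_projW_eq] at h

theorem vSystem_iff_gSystem_ψL (τ₀ : ℝ × ℝ → ℝ) (Q₀ : ℝ × ℝ → ℂ) {v : ℝ × ℝ → Quaternion ℂ}
    (hv : QSmooth v) (hW : ∀ p, v p ∈ Wset) :
    VSystem τ₀ Q₀ v ↔ GSystem τ₀ Q₀ (fun p => ψL (v p)) := by
  refine forall_congr' fun p => and_congr ?_ ?_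
  · rw [qdz_ψL (hv.differentiableAt p), qdz_rQ_comp, ← ψL_cI_mul_add_smul (hW p)]
    exact (ψL_injOn_Wset.eq_iff (qdz_mem_Wset (hv.differentiableAt p) hW)
      (add_mem_Wset (cI_mul_mem_Wset _ (hW p))
        (smul_mem_Wset _ (I_smul_cI_mul_Jq_mul_mem_Wset _ (hW p))))).symm
  · rw [qdzbar_ψL (hv.differentiableAt p), ← ψL_smul_I_smul_Jq_mul (hW p)]
    exact (ψL_injOn_Wset.eq_iff (qdzbar_mem_Wset (hv.differentiableAt p) hW)
      (smul_mem_Wset _ (I_smul_Jq_mul_mem_Wset (hW p)))).symm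

theorem stmt11_general (τ₀ : ℝ × ℝ → ℝ) (Q₀ : ℝ × ℝ → ℂ) :
    ((∀ w w' : Quaternion ℂ, ψL (w + w') = ψL w + ψL w') ∧
      (∀ (c : ℝ) (w : Quaternion ℂ), ψL (c • w) = c • ψL w) ∧
      Set.BijOn ψL Wset Lset) ∧
    (∀ v : ℝ × ℝ → Quaternion ℂ, QSmooth v → (∀ p, v p ∈ Wset) → VSystem τ₀ Q₀ v →
      (∀ p, ψL (v p) ∈ Lset) ∧ GSystem τ₀ Q₀ (fun p => ψL (v p))) ∧
    (∀ g : ℝ × ℝ → Quaternion ℂ, QSmooth g → (∀ p, g p ∈ Lset) → GSystem τ₀ Q₀ g →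
      ∀ v : ℝ × ℝ → Quaternion ℂ, (∀ p, v p ∈ Wset) → (∀ p, ψL (v p) = g p) →
        QSmooth v ∧ VSystem τ₀ Q₀ v) := by
  refine ⟨⟨ψLₗ.map_add, ψLₗ.map_smul, ψL_bijOn⟩,
    fun v hv hW hV => ⟨fun p => ψL_mem_Lset (hW p), (vSystem_iff_gSystem_ψL τ₀ Q₀ hv hW).1 hV⟩,
    fun g hg _ hG v hW hvg => ?_⟩
  have hv : QSmooth v := by
    have hψLInv : (fun p => ψLInv (g p)) = v := funext fun p => by rw [← hvg p, ψLInv_ψL (hW p)]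
    exact hψLInv ▸ hg.linearMap_comp ψLInv
  refine ⟨hv, (vSystem_iff_gSystem_ψL τ₀ Q₀ hv hW).2 ?_⟩
  rwa [show (fun p => ψL (v p)) = g from funext hvg]

/-- For smooth `τ₀ : ℝ² → (0,∞)` and `Q₀ : ℝ² → ℂ_I`:
(i) `w ↦ (1/2)(1+iI)·w` is an ℝ-linear bijection from `W` onto `L`;
(ii) if `v : ℝ² → W` is smooth and satisfies the `v`-system then `g := (1/2)(1+iI)·v` maps
into `L` and satisfies the `g`-system;
(iii) conversely, if `g : ℝ² → L` is smooth and satisfies the `g`-system, then the unique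
(smooth) map `v : ℝ² → W` with `g = (1/2)(1+iI)·v` satisfies the `v`-system. -/
theorem stmt11 (τ₀ : ℝ × ℝ → ℝ) (Q₀ : ℝ × ℝ → ℂ)
    (hτ : ContDiff ℝ (⊤ : ℕ∞) τ₀) (hτpos : ∀ p, 0 < τ₀ p)
    (hQ : ContDiff ℝ (⊤ : ℕ∞) Q₀) :
    ((∀ w w' : Quaternion ℂ, ψL (w + w') = ψL w + ψL w') ∧
      (∀ (c : ℝ) (w : Quaternion ℂ), ψL (c • w) = c • ψL w) ∧
      Set.BijOn ψL Wset Lset) ∧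
    (∀ v : ℝ × ℝ → Quaternion ℂ, QSmooth v → (∀ p, v p ∈ Wset) → VSystem τ₀ Q₀ v →
      (∀ p, ψL (v p) ∈ Lset) ∧ GSystem τ₀ Q₀ (fun p => ψL (v p))) ∧
    (∀ g : ℝ × ℝ → Quaternion ℂ, QSmooth g → (∀ p, g p ∈ Lset) → GSystem τ₀ Q₀ g →
      ∀ v : ℝ × ℝ → Quaternion ℂ, (∀ p, v p ∈ Wset) → (∀ p, ψL (v p) = g p) →
        QSmooth v ∧ VSystem τ₀ Q₀ v) :=
  stmt11_general τ₀ Q₀
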